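/- Let n ≥ 1, m > 0 and ε > 0, and let p, q ∈ [0, 3/4]^n. Let P and Q be the product distributions over {0,1}^n with mean vectors p and q, let V = {i ∈ [n] : max(p_i, q_i) < 1/m} and U = [n] ∖ V. If ‖P − Q‖₁ > ε, then at least one of the following holds: (i) ∑_{i∈V} (p_i − q_i)² > ε²/(16n), or (ii) ∑_{i∈U} (p_i − q_i)²/(p_i + q_i) > ε²/64. -/
import Mathlib

open Finset

/-- The product distribution over `{0,1}^n` with mean vector `p`. -/
noncomputable def prodDist {n : ℕ} (p : Fin n → ℝ) : (Fin n → Bool) → ℝ :=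
  fun x => ∏ i, if x i then p i else 1 - p i

/-- The L1 distance between two distributions on a finite set. -/
noncomputable def l1Dist {α : Type*} [Fintype α] (P Q : α → ℝ) : ℝ :=
  ∑ x, |P x - Q x|


private lemma sum_prod_bool (n : ℕ) (f : Fin n → Bool → ℝ) :
    ∑ x : Fin n → Bool, ∏ i, f i (x i) = ∏ i, (f i true + f i false) := by
  rw [← Fintype.piFinset_univ, ← Finset.prod_univ_sum]
  simp


private lemma l1_triangle {α : Type*} [Fintype α] (P Q R : α → ℝ) :
    l1Dist P R ≤ l1Dist P Q + l1Dist Q R := by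
  unfold l1Dist
  rw [← Finset.sum_add_distrib]
  apply Finset.sum_le_sum
  intro x _
  calc |P x - R x| = |(P x - Q x) + (Q x - R x)| := by ring_nf
    _ ≤ |P x - Q x| + |Q x - R x| := abs_add_le _ _

private lemma l1_nonneg {α : Type*} [Fintype α] (P Q : α → ℝ) : 0 ≤ l1Dist P Q :=
  Finset.sum_nonneg fun _ _ => abs_nonneg _


private lemma l1_single {n : ℕ} (r r' : Fin n → ℝ) (hr : ∀ i, 0 ≤ r i ∧ r i ≤ 1)
    (j : Fin n) (hagree : ∀ i, i ≠ j → r i = r' i) :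
    l1Dist (prodDist r) (prodDist r') = 2 * |r j - r' j| := by
  unfold l1Dist prodDist
  set H : Fin n → Bool → ℝ := fun i b =>
    if i = j then |(if b then r j else 1 - r j) - (if b then r' j else 1 - r' j)|
    else (if b then r i else 1 - r i) with hH
  have key : ∀ x : Fin n → Bool,
      |(∏ i, if x i then r i else 1 - r i) - (∏ i, if x i then r' i else 1 - r' i)| =
      ∏ i, H i (x i) := by
    intro x
    have h1 : (∏ i, if x i then r i else 1 - r i) =
        (if x j then r j else 1 - r j) * ∏ i ∈ univ.erase j, (if x i then r i else 1 - r i) :=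
      (Finset.mul_prod_erase univ _ (mem_univ j)).symm
    have h2 : (∏ i, if x i then r' i else 1 - r' i) =
        (if x j then r' j else 1 - r' j) * ∏ i ∈ univ.erase j, (if x i then r i else 1 - r i) := by
      rw [← Finset.mul_prod_erase univ _ (mem_univ j)]
      congr 1
      exact Finset.prod_congr rfl fun i hi => by
        rw [hagree i (Finset.ne_of_mem_erase hi)]
    have h3 : (∏ i, H i (x i)) =
        H j (x j) * ∏ i ∈ univ.erase j, H i (x i) :=
      (Finset.mul_prod_erase univ _ (mem_univ j)).symm
    rw [h1, h2, h3, ← sub_mul, abs_mul]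
    congr 1
    · simp [hH]
    · rw [abs_of_nonneg]
      · exact Finset.prod_congr rfl fun i hi => by
          simp [hH, Finset.ne_of_mem_erase hi]
      · exact Finset.prod_nonneg fun i _ => by
          rcases hr i with ⟨h0, h1⟩
          cases x i <;> simp <;> linarith
  simp_rw [key]
  rw [sum_prod_bool]
  rw [Finset.prod_eq_single j]
  · simp only [hH, if_pos rfl]
    norm_num [abs_sub_comm (r' j) (r j)]
    ring
  · intro i _ hij
    simp only [hH, if_neg hij]
    norm_num
  · intro h; exact absurd (mem_univ j) h


private lemma l1_le_two_sum {n : ℕ} (r r' : Fin n → ℝ)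
    (hr : ∀ i, 0 ≤ r i ∧ r i ≤ 1) (hr' : ∀ i, 0 ≤ r' i ∧ r' i ≤ 1) :
    l1Dist (prodDist r) (prodDist r') ≤ 2 * ∑ i, |r i - r' i| := by
  classical
  have key : ∀ S : Finset (Fin n),
      l1Dist (prodDist r) (prodDist (fun i => if i ∈ S then r' i else r i)) ≤
        2 * ∑ i ∈ S, |r i - r' i| := by
    intro S
    induction S using Finset.induction_on with
    | empty =>
      simp only [Finset.notMem_empty, if_false, Finset.sum_empty, mul_zero]
      have : l1Dist (prodDist r) (prodDist r) = 0 := by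
        unfold l1Dist; simp
      simp [this]
    | @insert a S ha ih =>
      have hmix : ∀ i, 0 ≤ (if i ∈ S then r' i else r i) ∧ (if i ∈ S then r' i else r i) ≤ 1 := by
        intro i; split <;> [exact hr' i; exact hr i]
      have hstep : l1Dist (prodDist (fun i => if i ∈ S then r' i else r i))
          (prodDist (fun i => if i ∈ insert a S then r' i else r i)) = 2 * |r a - r' a| := by
        have := l1_single (fun i => if i ∈ S then r' i else r i)
          (fun i => if i ∈ insert a S then r' i else r i) hmix a
          (fun i hi => by
            simp only [Finset.mem_insert]
            by_cases h : i ∈ S <;> simp [h, hi])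
        rw [this]
        rw [if_neg ha, if_pos (Finset.mem_insert_self a S)]
      calc l1Dist (prodDist r) (prodDist (fun i => if i ∈ insert a S then r' i else r i))
          ≤ l1Dist (prodDist r) (prodDist (fun i => if i ∈ S then r' i else r i)) +
            l1Dist (prodDist (fun i => if i ∈ S then r' i else r i))
              (prodDist (fun i => if i ∈ insert a S then r' i else r i)) := l1_triangle _ _ _
        _ ≤ 2 * ∑ i ∈ S, |r i - r' i| + 2 * |r a - r' a| := by rw [hstep]; linarith
        _ = 2 * ∑ i ∈ insert a S, |r i - r' i| := by rw [Finset.sum_insert ha]; ring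
  have := key Finset.univ
  simpa using this


private lemma hell_coord_nonneg {a b : ℝ} (ha : a ∈ Set.Icc (0:ℝ) 1)
    (hb : b ∈ Set.Icc (0:ℝ) 1) :
    0 ≤ 1 - (Real.sqrt (a * b) + Real.sqrt ((1 - a) * (1 - b))) := by
  obtain ⟨ha0, ha1⟩ := ha
  obtain ⟨hb0, hb1⟩ := hb
  have h1 : Real.sqrt (a*b) = Real.sqrt a * Real.sqrt b := Real.sqrt_mul ha0 b
  have h2 : Real.sqrt ((1-a)*(1-b)) = Real.sqrt (1-a) * Real.sqrt (1-b) :=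
    Real.sqrt_mul (by linarith) _
  have sa := Real.sq_sqrt ha0
  have sb := Real.sq_sqrt hb0
  have sc := Real.sq_sqrt (show (0:ℝ) ≤ 1 - a by linarith)
  have sd := Real.sq_sqrt (show (0:ℝ) ≤ 1 - b by linarith)
  rw [h1, h2]
  nlinarith [sq_nonneg (Real.sqrt a - Real.sqrt b), sq_nonneg (Real.sqrt (1-a) - Real.sqrt (1-b))]


private lemma one_sub_sum_le_prod {ι : Type*} (s : Finset ι) (h : ι → ℝ)
    (h0 : ∀ i ∈ s, 0 ≤ h i) (h1 : ∀ i ∈ s, h i ≤ 1) :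
    1 - ∑ i ∈ s, h i ≤ ∏ i ∈ s, (1 - h i) := by
  classical
  induction s using Finset.induction_on with
  | empty => simp
  | @insert a s ha ih =>
    rw [Finset.sum_insert ha, Finset.prod_insert ha]
    have ih' := ih (fun i hi => h0 i (Finset.mem_insert_of_mem hi))
      (fun i hi => h1 i (Finset.mem_insert_of_mem hi))
    have ha0 := h0 a (Finset.mem_insert_self a s)
    have ha1 := h1 a (Finset.mem_insert_self a s)
    have hprod : ∏ i ∈ s, (1 - h i) ≤ 1 := by
      apply Finset.prod_le_one
      · intro i hi; linarith [h1 i (Finset.mem_insert_of_mem hi)]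
      · intro i hi; linarith [h0 i (Finset.mem_insert_of_mem hi)]
    nlinarith


private lemma l1_sq_le_hellinger {n : ℕ} (r r' : Fin n → ℝ)
    (hr : ∀ i, 0 ≤ r i ∧ r i ≤ 1) (hr' : ∀ i, 0 ≤ r' i ∧ r' i ≤ 1) :
    (l1Dist (prodDist r) (prodDist r')) ^ 2 ≤
      8 * ∑ i, (1 - (Real.sqrt (r i * r' i) + Real.sqrt ((1 - r i) * (1 - r' i)))) := by
  classical
  set P := prodDist r
  set Q := prodDist r'
  have hPnn : ∀ x, 0 ≤ P x := fun x => Finset.prod_nonneg fun i _ => by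
    rcases hr i with ⟨h0, h1⟩; split <;> linarith
  have hQnn : ∀ x, 0 ≤ Q x := fun x => Finset.prod_nonneg fun i _ => by
    rcases hr' i with ⟨h0, h1⟩; split <;> linarith
  have hPsum : ∑ x, P x = 1 := by
    show ∑ x : Fin n → Bool, ∏ i, (if x i then r i else 1 - r i) = 1
    rw [sum_prod_bool n (fun i b => if b then r i else 1 - r i)]
    simp
  have hQsum : ∑ x, Q x = 1 := by
    show ∑ x : Fin n → Bool, ∏ i, (if x i then r' i else 1 - r' i) = 1
    rw [sum_prod_bool n (fun i b => if b then r' i else 1 - r' i)]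
    simp
  set s : ℝ := ∑ x, Real.sqrt (P x * Q x) with hs
  -- Cauchy-Schwarz step
  have habs : ∀ x, |P x - Q x| = |Real.sqrt (P x) - Real.sqrt (Q x)| *
      (Real.sqrt (P x) + Real.sqrt (Q x)) := by
    intro x
    rw [← abs_of_nonneg (add_nonneg (Real.sqrt_nonneg (P x)) (Real.sqrt_nonneg (Q x))),
      ← abs_mul]
    congr 1
    have := Real.sq_sqrt (hPnn x)
    have := Real.sq_sqrt (hQnn x)
    nlinarith
  have hCS : (l1Dist P Q)^2 ≤
      (∑ x, (Real.sqrt (P x) - Real.sqrt (Q x))^2) *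
      (∑ x, (Real.sqrt (P x) + Real.sqrt (Q x))^2) := by
    have := Finset.sum_mul_sq_le_sq_mul_sq Finset.univ
      (fun x => |Real.sqrt (P x) - Real.sqrt (Q x)|)
      (fun x => Real.sqrt (P x) + Real.sqrt (Q x))
    unfold l1Dist
    simp_rw [habs]
    simpa [sq_abs] using this
  have hsub : ∑ x, (Real.sqrt (P x) - Real.sqrt (Q x))^2 = 2 - 2*s := by
    have : ∀ x, (Real.sqrt (P x) - Real.sqrt (Q x))^2 =
        P x + Q x - 2 * Real.sqrt (P x * Q x) := by
      intro x
      rw [Real.sqrt_mul (hPnn x)]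
      have := Real.sq_sqrt (hPnn x)
      have := Real.sq_sqrt (hQnn x)
      nlinarith
    simp_rw [this]
    rw [Finset.sum_sub_distrib, Finset.sum_add_distrib, hPsum, hQsum, ← Finset.mul_sum, ← hs]
    ring
  have hadd : ∑ x, (Real.sqrt (P x) + Real.sqrt (Q x))^2 = 2 + 2*s := by
    have : ∀ x, (Real.sqrt (P x) + Real.sqrt (Q x))^2 =
        P x + Q x + 2 * Real.sqrt (P x * Q x) := by
      intro x
      rw [Real.sqrt_mul (hPnn x)]
      have := Real.sq_sqrt (hPnn x)
      have := Real.sq_sqrt (hQnn x)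
      nlinarith
    simp_rw [this]
    rw [Finset.sum_add_distrib, Finset.sum_add_distrib, hPsum, hQsum, ← Finset.mul_sum, ← hs]
    ring
  have hmain : (l1Dist P Q)^2 ≤ 8 * (1 - s) := by
    rw [hsub, hadd] at hCS
    nlinarith [sq_nonneg (1 - s)]
  -- compute s as product
  have hsprod : s = ∏ i, (Real.sqrt (r i * r' i) + Real.sqrt ((1 - r i) * (1 - r' i))) := by
    have hx : ∀ x : Fin n → Bool, Real.sqrt (P x * Q x) =
        ∏ i, Real.sqrt ((if x i then r i else 1 - r i) * (if x i then r' i else 1 - r' i)) := by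
      intro x
      have : P x * Q x = ∏ i, ((if x i then r i else 1 - r i) * (if x i then r' i else 1 - r' i)) := by
        rw [Finset.prod_mul_distrib]; rfl
      rw [this]
      induction (Finset.univ : Finset (Fin n)) using Finset.cons_induction with
      | empty => simp
      | cons a t hat iht =>
        rw [Finset.prod_cons, Finset.prod_cons, Real.sqrt_mul, iht]
        apply mul_nonneg <;> [skip; skip] <;>
          · rcases hr a with ⟨h0, h1⟩
            rcases hr' a with ⟨h0', h1'⟩
            split <;> linarith
    rw [hs]
    simp_rw [hx]
    rw [sum_prod_bool n (fun i b => Real.sqrt ((if b then r i else 1 - r i) * (if b then r' i else 1 - r' i)))]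
    simp
  -- Weierstrass
  have hW : 1 - s ≤ ∑ i, (1 - (Real.sqrt (r i * r' i) + Real.sqrt ((1 - r i) * (1 - r' i)))) := by
    have := one_sub_sum_le_prod Finset.univ
      (fun i => 1 - (Real.sqrt (r i * r' i) + Real.sqrt ((1 - r i) * (1 - r' i))))
      (fun i _ => hell_coord_nonneg ⟨(hr i).1, (hr i).2⟩ ⟨(hr' i).1, (hr' i).2⟩)
      (fun i _ => by
        have := add_nonneg (Real.sqrt_nonneg (r i * r' i)) (Real.sqrt_nonneg ((1 - r i) * (1 - r' i)))
        linarith)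
    simp only [sub_sub_cancel] at this
    rw [← hsprod] at this
    linarith
  linarith [hmain, hW]


set_option maxHeartbeats 1000000 in
private lemma hell_coord_le {a b : ℝ} (ha : a ∈ Set.Icc (0:ℝ) (3/4))
    (hb : b ∈ Set.Icc (0:ℝ) (3/4)) (hab : 0 < a + b) :
    1 - (Real.sqrt (a * b) + Real.sqrt ((1 - a) * (1 - b))) ≤ 2 * (a - b)^2 / (a + b) := by
  obtain ⟨ha0, ha1⟩ := ha
  obtain ⟨hb0, hb1⟩ := hb
  rw [Real.sqrt_mul ha0, Real.sqrt_mul (show (0:ℝ) ≤ 1 - a by linarith)]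
  set A := Real.sqrt a
  set B := Real.sqrt b
  set C := Real.sqrt (1 - a)
  set E := Real.sqrt (1 - b)
  have hA : A^2 = a := Real.sq_sqrt ha0
  have hB : B^2 = b := Real.sq_sqrt hb0
  have hC : C^2 = 1 - a := Real.sq_sqrt (by linarith)
  have hE : E^2 = 1 - b := Real.sq_sqrt (by linarith)
  have hA0 : 0 ≤ A := Real.sqrt_nonneg _
  have hB0 : 0 ≤ B := Real.sqrt_nonneg _
  have hC0 : 0 ≤ C := Real.sqrt_nonneg _
  have hE0 : 0 ≤ E := Real.sqrt_nonneg _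
  clear_value A B C E
  rw [le_div_iff₀ hab]
  have hce : (C - E)^2 * (C + E)^2 = (A - B)^2 * (A + B)^2 := by
    have h1 : (C - E)^2 * (C + E)^2 = (C^2 - E^2)^2 := by ring
    have h2 : (A - B)^2 * (A + B)^2 = (A^2 - B^2)^2 := by ring
    rw [h1, h2, hA, hB, hC, hE]
    ring
  have hCE2 : (1:ℝ)/2 ≤ (C + E)^2 := by nlinarith [mul_nonneg hC0 hE0]
  have h4 : (C - E)^2 ≤ 2 * ((A - B)^2 * (A + B)^2) := by
    nlinarith [sq_nonneg (C - E)]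
  have hsum : a + b = A^2 + B^2 := by rw [hA, hB]
  have hone : 1 - (A*B + C*E) = ((A - B)^2 + (C - E)^2)/2 := by
    nlinarith [hA, hB, hC, hE]
  rw [hsum, hone]
  have hab32 : A^2 + B^2 ≤ 3/2 := by rw [hA, hB]; linarith
  have hd : (a - b)^2 = (A - B)^2 * (A + B)^2 := by
    rw [← hA, ← hB]; ring
  rw [hd]
  have t1 : (A - B)^2 * (A^2 + B^2) ≤ (A - B)^2 * (A + B)^2 := by
    nlinarith [mul_nonneg (sq_nonneg (A - B)) (mul_nonneg hA0 hB0)]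
  have t2 : (C - E)^2 * (A^2 + B^2) ≤ 3 * ((A - B)^2 * (A + B)^2) := by
    nlinarith [mul_le_mul_of_nonneg_left hab32 (sq_nonneg (C - E)), h4]
  linarith


theorem stmt12 (n : ℕ) (hn : 1 ≤ n) (m ε : ℝ) (hm : 0 < m) (hε : 0 < ε)
    (p q : Fin n → ℝ)
    (hp : ∀ i, p i ∈ Set.Icc (0:ℝ) (3/4)) (hq : ∀ i, q i ∈ Set.Icc (0:ℝ) (3/4))
    (hfar : ε < l1Dist (prodDist p) (prodDist q)) :
    ε ^ 2 / (16 * n) <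
        ∑ i ∈ Finset.univ.filter (fun i : Fin n => max (p i) (q i) < 1 / m),
          (p i - q i) ^ 2 ∨
      ε ^ 2 / 64 <
        ∑ i ∈ Finset.univ.filter (fun i : Fin n => ¬ max (p i) (q i) < 1 / m),
          (p i - q i) ^ 2 / (p i + q i) := by
  classical
  by_contra hcon
  push_neg at hcon
  obtain ⟨hV, hU⟩ := hcon
  set Vf := Finset.univ.filter (fun i : Fin n => max (p i) (q i) < 1 / m) with hVf
  set Uf := Finset.univ.filter (fun i : Fin n => ¬ max (p i) (q i) < 1 / m) with hUf
  -- hybrid vector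
  set p' : Fin n → ℝ := fun i => if max (p i) (q i) < 1 / m then q i else p i with hp'
  have hp01 : ∀ i, 0 ≤ p i ∧ p i ≤ 1 := fun i => ⟨(hp i).1, le_trans (hp i).2 (by norm_num)⟩
  have hq01 : ∀ i, 0 ≤ q i ∧ q i ≤ 1 := fun i => ⟨(hq i).1, le_trans (hq i).2 (by norm_num)⟩
  have hp'01 : ∀ i, 0 ≤ p' i ∧ p' i ≤ 1 := fun i => by
    rw [hp']; dsimp only; split <;> [exact hq01 i; exact hp01 i]
  -- part 1 : l1Dist P P' ≤ 2 * Sv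
  set Sv := ∑ i ∈ Vf, |p i - q i| with hSv
  have h1 : l1Dist (prodDist p) (prodDist p') ≤ 2 * Sv := by
    refine le_trans (l1_le_two_sum p p' hp01 hp'01) ?_
    have : ∑ i, |p i - p' i| = Sv := by
      rw [hSv, hVf, Finset.sum_filter]
      apply Finset.sum_congr rfl
      intro i _
      rw [hp']; dsimp only
      split <;> simp
    rw [this]
  have hSv0 : 0 ≤ Sv := Finset.sum_nonneg fun _ _ => abs_nonneg _
  -- part 2 : l1Dist P' Q
  set B := l1Dist (prodDist p') (prodDist q) with hB
  have hB0 : 0 ≤ B := l1_nonneg _ _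
  have h2 : B ^ 2 ≤ 16 * ∑ i ∈ Uf, (p i - q i) ^ 2 / (p i + q i) := by
    refine le_trans (l1_sq_le_hellinger p' q hp'01 hq01) ?_
    have hterm : ∀ i, (1 - (Real.sqrt (p' i * q i) + Real.sqrt ((1 - p' i) * (1 - q i)))) ≤
        if max (p i) (q i) < 1 / m then 0 else 2 * (p i - q i)^2 / (p i + q i) := by
      intro i
      rw [hp']; dsimp only
      split
      case isTrue h =>
        rw [Real.sqrt_mul_self (hq01 i).1, Real.sqrt_mul_self (by linarith [(hq01 i).2])]
        linarith
      case isFalse h =>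
        apply hell_coord_le (hp i) (hq i)
        have hmax : 1 / m ≤ max (p i) (q i) := not_lt.mp h
        have h1m : 0 < 1 / m := by positivity
        rcases max_cases (p i) (q i) with ⟨he, _⟩ | ⟨he, _⟩ <;>
          [linarith [(hq i).1, he ▸ lt_of_lt_of_le h1m hmax];
           linarith [(hp i).1, he ▸ lt_of_lt_of_le h1m hmax]]
    calc 8 * ∑ i, (1 - (Real.sqrt (p' i * q i) + Real.sqrt ((1 - p' i) * (1 - q i))))
        ≤ 8 * ∑ i, (if max (p i) (q i) < 1 / m then 0 else 2 * (p i - q i)^2 / (p i + q i)) := by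
          have := Finset.sum_le_sum (fun i (_ : i ∈ Finset.univ) => hterm i)
          linarith
      _ = 16 * ∑ i ∈ Uf, (p i - q i) ^ 2 / (p i + q i) := by
          rw [hUf, Finset.sum_filter]
          rw [Finset.mul_sum, Finset.mul_sum]
          apply Finset.sum_congr rfl
          intro i _
          split <;> ring
  -- combine
  have htri := l1_triangle (prodDist p) (prodDist p') (prodDist q)
  have hcard : (Vf.card : ℝ) ≤ n := by
    have := Finset.card_filter_le Finset.univ (fun i : Fin n => max (p i) (q i) < 1 / m)
    rw [hVf]
    exact_mod_cast le_trans this (by simp)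
  have hCS : Sv ^ 2 ≤ (Vf.card : ℝ) * ∑ i ∈ Vf, (p i - q i)^2 := by
    have h := Finset.sum_mul_sq_le_sq_mul_sq Vf (fun _ => (1:ℝ)) (fun i => |p i - q i|)
    simp only [one_mul, one_pow, sq_abs, Finset.sum_const, nsmul_eq_mul, mul_one] at h
    exact h
  have hn0 : (0:ℝ) < n := by exact_mod_cast hn
  have hSvsq : Sv ^ 2 ≤ ε ^ 2 / 16 := by
    calc Sv ^ 2 ≤ (Vf.card : ℝ) * ∑ i ∈ Vf, (p i - q i)^2 := hCS
      _ ≤ (n : ℝ) * (ε ^ 2 / (16 * n)) := by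
          apply mul_le_mul hcard hV (Finset.sum_nonneg fun _ _ => sq_nonneg _) (le_of_lt hn0)
      _ = ε ^ 2 / 16 := by field_simp
  have hSvle : Sv ≤ ε / 4 := by nlinarith
  have hUfilter : Uf = Finset.univ.filter (fun i => 1 / m ≤ max (p i) (q i)) := by
    rw [hUf]
    apply Finset.filter_congr
    intro i _
    exact not_lt
  rw [← hUfilter] at hU
  have hBsq : B ^ 2 ≤ ε ^ 2 / 4 := by
    calc B ^ 2 ≤ 16 * ∑ i ∈ Uf, (p i - q i) ^ 2 / (p i + q i) := h2
      _ ≤ 16 * (ε ^ 2 / 64) := by linarith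
      _ = ε ^ 2 / 4 := by ring
  have hBle : B ≤ ε / 2 := by nlinarith
  have : l1Dist (prodDist p) (prodDist q) ≤ ε := by
    calc l1Dist (prodDist p) (prodDist q) ≤ l1Dist (prodDist p) (prodDist p') + B := htri
      _ ≤ 2 * Sv + B := by linarith
      _ ≤ 2 * (ε/4) + ε/2 := by linarith
      _ = ε := by ring
  linarith
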